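/- Failure of relative monotonicity for hidden choice: for every p ∈ (0,1) there exist finite sets X and Y and channels C₁ : X×Y → ℝ and C₂ : X×Y → ℝ such that V_g[π,C₁] ≤ V_g[π,C₂] for every prior π on X and every gain function g, and yet there exist a prior π', a gain function g', and a channel C compatible with C₁ and C₂ such that V_{g'}[π', C₁ ⊕_p C] > V_{g'}[π', C₂ ⊕_p C]. -/

import Mathlib

open Finset

/-- A channel with input set `X` and output set `Y`: entries are nonnegative
and each row sums to `1`. -/
def IsChannel {X Y : Type*} [Fintype Y] (C : X → Y → ℝ) : Prop :=
  (∀ x y, 0 ≤ C x y) ∧ ∀ x, ∑ y, C x y = 1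

/-- A channel with input set `X` whose output set is the finset `S` of a common
ambient type `Ω`: entries are nonnegative, each row sums to `1` over `S`, and
entries vanish outside `S`. -/
def IsChannelOn {X Ω : Type*} (S : Finset Ω) (C : X → Ω → ℝ) : Prop :=
  (∀ x y, 0 ≤ C x y) ∧ (∀ x, ∑ y ∈ S, C x y = 1) ∧ ∀ x y, y ∉ S → C x y = 0

/-- Parallel composition `C₁ ∥ C₂`. -/
def par {X Y₁ Y₂ : Type*} (C₁ : X → Y₁ → ℝ) (C₂ : X → Y₂ → ℝ) : X → Y₁ × Y₂ → ℝ :=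
  fun x y => C₁ x y.1 * C₂ x y.2

/-- Visible choice `C₁ ⊞_p C₂`, on the disjoint union of the output sets. -/
def vis {X Y₁ Y₂ : Type*} (p : ℝ) (C₁ : X → Y₁ → ℝ) (C₂ : X → Y₂ → ℝ) : X → Y₁ ⊕ Y₂ → ℝ :=
  fun x => Sum.elim (fun y => p * C₁ x y) (fun y => (1 - p) * C₂ x y)

/-- Hidden choice `C₁ ⊕_p C₂` for channels whose output sets lie in a common
ambient type (pointwise convex combination; this agrees with the case analysis
on `Y₁ ∩ Y₂`, `Y₁ \ Y₂`, `Y₂ \ Y₁` since channels vanish outside their output sets). -/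
def hid {X Ω : Type*} (p : ℝ) (C₁ C₂ : X → Ω → ℝ) : X → Ω → ℝ :=
  fun x y => p * C₁ x y + (1 - p) * C₂ x y

/-- Equality up to a permutation of the output set, `C₁ ≐ C₂`. -/
def PermEq {X Y₁ Y₂ : Type*} (C₁ : X → Y₁ → ℝ) (C₂ : X → Y₂ → ℝ) : Prop :=
  ∃ ψ : Y₁ ≃ Y₂, ∀ x y, C₁ x y = C₂ x (ψ y)

/-- Cascading `CD` of channels. -/
def cascade {X Y Z : Type*} [Fintype Y] (C : X → Y → ℝ) (D : Y → Z → ℝ) : X → Z → ℝ :=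
  fun x z => ∑ y, C x y * D y z

/-- `Refines C₁ C₂` (written `C₁ ⊑ C₂`): there is a channel `D` with `C₁D = C₂`. -/
def Refines {X Y₁ Y₂ : Type*} [Fintype Y₁] [Fintype Y₂] (C₁ : X → Y₁ → ℝ)
    (C₂ : X → Y₂ → ℝ) : Prop :=
  ∃ D : Y₁ → Y₂ → ℝ, IsChannel D ∧ cascade C₁ D = C₂

/-- Equivalence of channels: mutual refinement. -/
def EquivCh {X Y₁ Y₂ : Type*} [Fintype Y₁] [Fintype Y₂] (C₁ : X → Y₁ → ℝ)
    (C₂ : X → Y₂ → ℝ) : Prop :=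
  Refines C₁ C₂ ∧ Refines C₂ C₁

/-- A prior: a probability distribution on the finite input set `X`. -/
def IsPrior {X : Type*} [Fintype X] (π : X → ℝ) : Prop :=
  (∀ x, 0 ≤ π x) ∧ ∑ x, π x = 1

/-- A gain function `g : W × X → [0,1]`. -/
def IsGain {W X : Type*} (g : W → X → ℝ) : Prop :=
  ∀ w x, 0 ≤ g w x ∧ g w x ≤ 1

/-- Posterior g-vulnerability `V_g[π, C]`. -/
noncomputable def postV {W X Y : Type*} [Fintype W] [Nonempty W] [Fintype X] [Fintype Y]
    (π : X → ℝ) (g : W → X → ℝ) (C : X → Y → ℝ) : ℝ :=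
  ∑ y, univ.sup' univ_nonempty fun w => ∑ x, C x y * π x * g w x

/-!
All channels are binary symmetric. `C₁ = bsc (1/2)` leaks nothing, so its posterior vulnerability
is the prior one, which no channel lowers; this gives `C₁ ≤ C₂` for `C₂ = bsc ((3-p)/4)`. A hidden
choice of binary symmetric channels is binary symmetric with the convex combination of the
parameters, so for `C = bsc ((2-p)/4)` the choice `C₂ ⊕_p C` collapses to the null channel
`bsc (1/2)`, while `C₁ ⊕_p C = bsc ((2-p+p²)/4)` still leaks, since `p² ≠ p`.
-/

noncomputable def priorV {W X : Type*} [Fintype W] [Nonempty W] [Fintype X]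
    (π : X → ℝ) (g : W → X → ℝ) : ℝ :=
  univ.sup' univ_nonempty fun w => ∑ x, π x * g w x

section Vulnerability

variable {W X Y : Type*} [Fintype W] [Nonempty W] [Fintype X] [Fintype Y]

theorem priorV_le_postV (π : X → ℝ) (g : W → X → ℝ) {C : X → Y → ℝ}
    (hC : ∀ x, ∑ y, C x y = 1) : priorV π g ≤ postV π g C := by
  obtain ⟨w, -, hw⟩ := exists_mem_eq_sup' univ_nonempty fun w => ∑ x, π x * g w x
  calc priorV π g = ∑ x, π x * g w x := hw
    _ = ∑ y, ∑ x, C x y * π x * g w x := by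
      rw [sum_comm]
      refine sum_congr rfl fun x _ => ?_
      rw [← sum_mul, ← sum_mul, hC, one_mul]
    _ ≤ postV π g C :=
      sum_le_sum fun y _ => le_sup' (fun w => ∑ x, C x y * π x * g w x) (mem_univ w)

theorem postV_const_rows (π : X → ℝ) (g : W → X → ℝ) {q : Y → ℝ} (hq : ∀ y, 0 ≤ q y)
    (hq_sum : ∑ y, q y = 1) : postV π g (fun _ => q) = priorV π g := by
  have hcol (y : Y) : (univ.sup' univ_nonempty fun w => ∑ x, q y * π x * g w x)
      = q y * priorV π g := by
    simp only [mul_assoc, ← mul_sum]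
    exact (mul₀_sup' (hq y) _ _ _).symm
  simp only [postV, hcol, ← sum_mul, hq_sum, one_mul]

theorem postV_ite_gain [DecidableEq X] [Nonempty X] (π : X → ℝ) (C : X → Y → ℝ) :
    postV π (fun w x => if w = x then 1 else 0) C
      = ∑ y, univ.sup' univ_nonempty fun x => C x y * π x := by
  simp [postV]

end Vulnerability

def bsc (a : ℝ) : Fin 2 → Fin 2 → ℝ :=
  fun x y => if x = y then a else 1 - a

theorem isChannel_bsc {a : ℝ} (ha₀ : 0 ≤ a) (ha₁ : a ≤ 1) : IsChannel (bsc a) := by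
  refine ⟨fun x y => ?_, fun x => ?_⟩
  · unfold bsc; split <;> linarith
  · fin_cases x <;> simp [bsc, Fin.sum_univ_two]

theorem hid_bsc (p a b : ℝ) : hid p (bsc a) (bsc b) = bsc (p * a + (1 - p) * b) := by
  ext x y
  unfold hid bsc
  split <;> ring

theorem bsc_half : bsc (1 / 2) = fun _ _ => 1 / 2 := by
  ext x y
  unfold bsc
  split <;> norm_num

theorem sup'_univ_fin_two {α : Type*} [LinearOrder α] (f : Fin 2 → α) :
    univ.sup' univ_nonempty f = max (f 0) (f 1) :=
  eq_of_forall_ge_iff fun c => by simp [sup'_le_iff, Fin.forall_fin_two]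

theorem postV_bsc_uniform (a : ℝ) :
    postV (fun _ => 1 / 2) (fun w x => if w = x then 1 else 0) (bsc a) = max a (1 - a) := by
  rw [postV_ite_gain]
  simp [Fin.sum_univ_two, sup'_univ_fin_two, bsc]
  rw [max_comm ((1 - a) * 2⁻¹), ← max_mul_of_nonneg _ _ (by norm_num)]
  ring

/-- Finite sets are represented by `Fin nX` and `Fin nY`, and finite nonempty action sets by
`Fin (k + 1)`. -/
theorem relative_monotonicity_fails_hidden_choice (p : ℝ) (hp0 : 0 < p) (hp1 : p < 1) :
    ∃ (nX nY : ℕ) (C₁ C₂ : Fin nX → Fin nY → ℝ),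
      IsChannel C₁ ∧ IsChannel C₂ ∧
      (∀ (W : Type) [Fintype W] [Nonempty W] (π : Fin nX → ℝ) (g : W → Fin nX → ℝ),
        IsPrior π → IsGain g → postV π g C₁ ≤ postV π g C₂) ∧
      ∃ (k : ℕ) (π' : Fin nX → ℝ) (g' : Fin (k + 1) → Fin nX → ℝ)
          (C : Fin nX → Fin nY → ℝ),
        IsPrior π' ∧ IsGain g' ∧ IsChannel C ∧
          postV π' g' (hid p C₂ C) < postV π' g' (hid p C₁ C) := by
  refine ⟨2, 2, bsc (1 / 2), bsc ((3 - p) / 4), isChannel_bsc (by norm_num) (by norm_num),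
    isChannel_bsc (by linarith) (by linarith), fun W _ _ π g _ _ => ?_,
    1, fun _ => 1 / 2, fun w x => if w = x then 1 else 0, bsc ((2 - p) / 4),
    ⟨fun _ => by norm_num, by norm_num⟩, fun w x => by dsimp only; split <;> norm_num,
    isChannel_bsc (by linarith) (by linarith), ?_⟩
  · rw [bsc_half, postV_const_rows π g (fun _ => by norm_num) (by norm_num)]
    exact priorV_le_postV π g (isChannel_bsc (by linarith) (by linarith)).2
  · have hnull : p * ((3 - p) / 4) + (1 - p) * ((2 - p) / 4) = 1 / 2 := by ring
    rw [hid_bsc, hid_bsc, postV_bsc_uniform, postV_bsc_uniform, hnull]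
    rw [show max (1 / 2 : ℝ) (1 - 1 / 2) = 1 / 2 by norm_num]
    exact lt_max_of_lt_right (by nlinarith)
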